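/- arXiv:2503.01621 — 3 statements merged into one kernel-verified Lean document; each statement's English description precedes it below -/
import Mathlib

section
/- Let κ ≥ 1, M ≥ 0, R > 0. Let F, A, B : [0,R] → [0,∞) be continuous functions with F(0) = 0, and assume that for all r ∈ [0,R]: F(r) ≤ A(r)·(F(r)+1)^κ + B(r), A(r) ≤ (1/2)(M+4)^{-κ}, and B(r) ≤ M+1. Then F(r) ≤ 2(M+4)^κ A(r) + B(r) for all r ∈ [0,R]. -/
/-- Continuity (open–closed) buckling argument: if `F, A, B : [0,R] → [0,∞)`
are continuous, `F 0 = 0`, and for all `r ∈ [0,R]` one has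
`F r ≤ A r * (F r + 1)^κ + B r`, `A r ≤ (1/2)(M+4)^(-κ)`, `B r ≤ M+1`,
then `F r ≤ 2 (M+4)^κ A r + B r` for all `r ∈ [0,R]`. -/
theorem stmt1 (κ M R : ℝ) (hκ : 1 ≤ κ) (hM : 0 ≤ M) (hR : 0 < R)
    (F A B : ℝ → ℝ)
    (hFc : ContinuousOn F (Set.Icc 0 R))
    (hAc : ContinuousOn A (Set.Icc 0 R))
    (hBc : ContinuousOn B (Set.Icc 0 R))
    (hF0 : F 0 = 0)
    (hFnn : ∀ r ∈ Set.Icc (0 : ℝ) R, 0 ≤ F r)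
    (hAnn : ∀ r ∈ Set.Icc (0 : ℝ) R, 0 ≤ A r)
    (hBnn : ∀ r ∈ Set.Icc (0 : ℝ) R, 0 ≤ B r)
    (hineq : ∀ r ∈ Set.Icc (0 : ℝ) R, F r ≤ A r * (F r + 1) ^ κ + B r)
    (hAsmall : ∀ r ∈ Set.Icc (0 : ℝ) R, A r ≤ (1 / 2) * (M + 4) ^ (-κ))
    (hBsmall : ∀ r ∈ Set.Icc (0 : ℝ) R, B r ≤ M + 1) :
    ∀ r ∈ Set.Icc (0 : ℝ) R, F r ≤ 2 * (M + 4) ^ κ * A r + B r := by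
  have hM4 : (0:ℝ) < M + 4 := by linarith
  have hκ0 : (0:ℝ) ≤ κ := by linarith
  have hpow_pos : (0:ℝ) < (M + 4) ^ κ := Real.rpow_pos_of_pos hM4 κ
  -- key self-improvement: if F r ≤ M+3 then F r ≤ M + 3/2
  have key : ∀ r ∈ Set.Icc (0 : ℝ) R, F r ≤ M + 3 → F r ≤ M + 3/2 := by
    intro r hr hF3
    have h1 : (F r + 1) ^ κ ≤ (M + 4) ^ κ := by
      apply Real.rpow_le_rpow (by linarith [hFnn r hr]) (by linarith) hκ0
    have h2 : A r * (F r + 1) ^ κ ≤ (1/2) * (M + 4) ^ (-κ) * (M + 4) ^ κ :=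
      mul_le_mul (hAsmall r hr) h1
        (Real.rpow_nonneg (by linarith [hFnn r hr]) κ)
        (by positivity)
    have h3 : (M + 4) ^ (-κ) * (M + 4) ^ κ = 1 := by
      rw [← Real.rpow_add hM4]; simp
    have h4 : A r * (F r + 1) ^ κ ≤ 1/2 := by
      calc A r * (F r + 1) ^ κ ≤ (1/2) * ((M + 4) ^ (-κ) * (M + 4) ^ κ) := by
            linarith [h2]
        _ = 1/2 := by rw [h3]; ring
    linarith [hineq r hr, hBsmall r hr]
  -- open-closed argument on the subtype
  have hbound : ∀ r ∈ Set.Icc (0 : ℝ) R, F r ≤ M + 3/2 := by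
    haveI : PreconnectedSpace (Set.Icc (0:ℝ) R) :=
      Subtype.preconnectedSpace isPreconnected_Icc
    set S : Set (Set.Icc (0:ℝ) R) := {x | F x.1 ≤ M + 3/2} with hS
    have hFcont : Continuous fun x : Set.Icc (0:ℝ) R => F x.1 :=
      hFc.restrict
    have hclosed : IsClosed S := isClosed_le hFcont continuous_const
    have hSeq : S = {x : Set.Icc (0:ℝ) R | F x.1 < M + 2} := by
      ext x
      constructor
      · intro hx
        have hx' : F x.1 ≤ M + 3/2 := hx
        exact lt_of_le_of_lt hx' (by linarith)
      · intro hx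
        have hx' : F x.1 < M + 2 := hx
        exact key x.1 x.2 (by linarith)
    have hopen : IsOpen S := by
      rw [hSeq]; exact isOpen_lt hFcont continuous_const
    have hne : S.Nonempty := by
      refine ⟨⟨0, Set.left_mem_Icc.2 hR.le⟩, ?_⟩
      simp only [hS, Set.mem_setOf_eq, hF0]; linarith
    have huniv : S = Set.univ := IsClopen.eq_univ ⟨hclosed, hopen⟩ hne
    intro r hr
    have : (⟨r, hr⟩ : Set.Icc (0:ℝ) R) ∈ S := huniv ▸ Set.mem_univ _
    exact this
  -- conclude
  intro r hr
  have hF3 : F r ≤ M + 3 := by linarith [hbound r hr]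
  have h1 : (F r + 1) ^ κ ≤ (M + 4) ^ κ :=
    Real.rpow_le_rpow (by linarith [hFnn r hr]) (by linarith) hκ0
  have h2 : A r * (F r + 1) ^ κ ≤ A r * (M + 4) ^ κ :=
    mul_le_mul_of_nonneg_left h1 (hAnn r hr)
  have h3 : A r * (M + 4) ^ κ ≤ 2 * (M + 4) ^ κ * A r := by
    nlinarith [hAnn r hr, hpow_pos]
  linarith [hineq r hr]
end

section
/- Let α ∈ (−1, 0), let β be a multi-index and n ∈ ℕ₀^{1+d} with β(n) ≥ 1. Then |n| ≤ |β| (where |β| := α + 2β(𝔰)(1+α) + ∑_m β(m)(|m| − α) and |n| is the parabolic degree of n), and equality holds if and only if β = δ_n, the multi-index equal to 1 at n and 0 elsewhere. In particular, for a non-purely-polynomial β (i.e. β not of the form δ_m), β(n) = 0 whenever |n| ≥ |β|. -/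
/-- Multi-indices: finitely supported maps from `{𝔰} ⊔ ℕ₀^{1+d}` to `ℕ₀`. -/
abbrev MIdx (d : ℕ) := (Unit ⊕ (Fin (d + 1) → ℕ)) →₀ ℕ

/-- Parabolic degree `|n| = 2n₀ + n₁ + ⋯ + n_d` of `n ∈ ℕ₀^{1+d}`. -/
def pdeg {d : ℕ} (n : Fin (d + 1) → ℕ) : ℕ := n 0 + ∑ i, n i

/-- Homogeneity `|β| := α + 2β(𝔰)(1+α) + ∑_m β(m)(|m| − α)`. -/
noncomputable def homog {d : ℕ} (α : ℝ) (β : MIdx d) : ℝ :=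
  α + 2 * (β (Sum.inl ()) : ℝ) * (1 + α) +
    β.sum fun x k =>
      Sum.elim (fun _ : Unit => (0 : ℝ)) (fun n => (k : ℝ) * ((pdeg n : ℝ) - α)) x

lemma stmt5_aux (d : ℕ) (α : ℝ) (hα : α ∈ Set.Ioo (-1 : ℝ) 0) (β : MIdx d)
    (n : Fin (d + 1) → ℕ) (hn : 1 ≤ β (Sum.inr n)) :
    (pdeg n : ℝ) ≤ homog α β ∧
    ((pdeg n : ℝ) = homog α β ↔ β = Finsupp.single (Sum.inr n) 1) := by
  obtain ⟨hα1, hα2⟩ := hα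
  set f : (Unit ⊕ (Fin (d + 1) → ℕ)) → ℕ → ℝ :=
    fun x k => Sum.elim (fun _ : Unit => (0 : ℝ)) (fun n => (k : ℝ) * ((pdeg n : ℝ) - α)) x
    with hfdef
  have hf0 : ∀ x, f x 0 = 0 := by rintro (x | x) <;> simp [hfdef]
  have hpos : ∀ m : Fin (d + 1) → ℕ, (0 : ℝ) < (pdeg m : ℝ) - α := by
    intro m
    have : (0 : ℝ) ≤ (pdeg m : ℝ) := Nat.cast_nonneg _
    linarith
  have hfnn : ∀ x k, 0 ≤ f x k := by
    rintro (x | x) k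
    · simp [hfdef]
    · exact mul_nonneg (Nat.cast_nonneg _) (hpos x).le
  have hmem : Sum.inr n ∈ β.support := Finsupp.mem_support_iff.2 (by omega)
  have hS_ge : ∀ t : Finset (Unit ⊕ (Fin (d + 1) → ℕ)), t ⊆ β.support →
      ∑ x ∈ t, f x (β x) ≤ β.sum f := fun t ht =>
    Finset.sum_le_sum_of_subset_of_nonneg ht (fun x _ _ => hfnn x (β x))
  have hinl : (0 : ℝ) ≤ 2 * (β (Sum.inl ()) : ℝ) * (1 + α) := by
    have : (0 : ℝ) ≤ (β (Sum.inl ()) : ℝ) := Nat.cast_nonneg _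
    nlinarith
  have hterm : ∀ k : ℕ, 1 ≤ k → ((k : ℝ) * ((pdeg n : ℝ) - α)) ≥ (pdeg n : ℝ) - α := by
    intro k hk
    have : (1 : ℝ) ≤ (k : ℝ) := by exact_mod_cast hk
    nlinarith [hpos n]
  have h1 : (pdeg n : ℝ) - α ≤ β.sum f := by
    have := hS_ge {Sum.inr n} (by simpa using hmem)
    rw [Finset.sum_singleton] at this
    have h2 : f (Sum.inr n) (β (Sum.inr n)) = (β (Sum.inr n) : ℝ) * ((pdeg n : ℝ) - α) := rfl
    rw [h2] at this
    have := hterm _ hn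
    linarith
  have hle : (pdeg n : ℝ) ≤ homog α β := by
    unfold homog
    linarith
  refine ⟨hle, ?_, ?_⟩
  · -- equality → single
    intro heq
    by_contra hne
    obtain ⟨x, hx⟩ := Finsupp.ne_iff.1 hne
    have hstrict : (pdeg n : ℝ) < homog α β := by
      rcases x with u | m
      · -- β(inl) ≥ 1
        have h0 : (Finsupp.single (Sum.inr n) 1 : MIdx d) (Sum.inl u) = 0 := by
          simp [Finsupp.single_apply]
        rw [h0] at hx
        have hβ1 : 1 ≤ β (Sum.inl u) := Nat.one_le_iff_ne_zero.2 hx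
        have : (1 : ℝ) ≤ (β (Sum.inl ()) : ℝ) := by
          exact_mod_cast (by cases u; exact hβ1)
        unfold homog
        nlinarith
      · by_cases hmn : m = n
        · -- β(inr n) ≥ 2
          subst hmn
          have h0 : (Finsupp.single (Sum.inr m) 1 : MIdx d) (Sum.inr m) = 1 := by simp
          rw [h0] at hx
          have hβ2 : 2 ≤ β (Sum.inr m) := by omega
          have h1' : 2 * ((pdeg m : ℝ) - α) ≤ β.sum f := by
            have := hS_ge {Sum.inr m} (by simpa using hmem)
            rw [Finset.sum_singleton] at this
            have h2 : f (Sum.inr m) (β (Sum.inr m)) =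
                (β (Sum.inr m) : ℝ) * ((pdeg m : ℝ) - α) := rfl
            rw [h2] at this
            have h3 : (2 : ℝ) ≤ (β (Sum.inr m) : ℝ) := by exact_mod_cast hβ2
            nlinarith [hpos m]
          unfold homog
          have := hpos m
          linarith
        · -- m ≠ n, β(inr m) ≥ 1
          have h0 : (Finsupp.single (Sum.inr n) 1 : MIdx d) (Sum.inr m) = 0 := by
            simp [Finsupp.single_apply, show n ≠ m from fun h => hmn h.symm]
          rw [h0] at hx
          have hβm : 1 ≤ β (Sum.inr m) := Nat.one_le_iff_ne_zero.2 hx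
          have hmemm : Sum.inr m ∈ β.support := Finsupp.mem_support_iff.2 (by omega)
          have hne' : (Sum.inr n : Unit ⊕ (Fin (d + 1) → ℕ)) ≠ Sum.inr m :=
            fun h => hmn (Sum.inr.inj h).symm
          have h1' : ((pdeg n : ℝ) - α) + ((pdeg m : ℝ) - α) ≤ β.sum f := by
            have hsub : ({Sum.inr n, Sum.inr m} : Finset (Unit ⊕ (Fin (d + 1) → ℕ)))
                ⊆ β.support := by
              intro x hx'
              simp only [Finset.mem_insert, Finset.mem_singleton] at hx'
              rcases hx' with rfl | rfl
              · exact hmem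
              · exact hmemm
            have := hS_ge _ hsub
            rw [Finset.sum_pair hne'] at this
            have e1 : f (Sum.inr n) (β (Sum.inr n)) =
                (β (Sum.inr n) : ℝ) * ((pdeg n : ℝ) - α) := rfl
            have e2 : f (Sum.inr m) (β (Sum.inr m)) =
                (β (Sum.inr m) : ℝ) * ((pdeg m : ℝ) - α) := rfl
            rw [e1, e2] at this
            have t1 := hterm _ hn
            have t2 : (1 : ℝ) ≤ (β (Sum.inr m) : ℝ) := by exact_mod_cast hβm
            nlinarith [hpos m]
          unfold homog
          have := hpos m
          linarith
    linarith
  · -- single → equality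
    intro heq
    subst heq
    unfold homog
    rw [Finsupp.sum_single_index (hf0 _)]
    have h0 : (Finsupp.single (Sum.inr n) 1 : MIdx d) (Sum.inl ()) = 0 := by
      simp [Finsupp.single_apply]
    rw [h0]
    show (pdeg n : ℝ) = α + 2 * ((0 : ℕ) : ℝ) * (1 + α) + ((1 : ℕ) : ℝ) * ((pdeg n : ℝ) - α)
    push_cast
    ring

/-- Let `α ∈ (−1,0)`, `β` a multi-index and `n` with `β(n) ≥ 1`.
Then `|n| ≤ |β|`, with equality iff `β = δ_n`. In particular, if `β` is not purely
polynomial then `β(n') = 0` whenever `|n'| ≥ |β|`. -/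
theorem stmt5 (d : ℕ) (α : ℝ) (hα : α ∈ Set.Ioo (-1 : ℝ) 0) (β : MIdx d)
    (n : Fin (d + 1) → ℕ) (hn : 1 ≤ β (Sum.inr n)) :
    (pdeg n : ℝ) ≤ homog α β ∧
    ((pdeg n : ℝ) = homog α β ↔ β = Finsupp.single (Sum.inr n) 1) ∧
    ((∀ m : Fin (d + 1) → ℕ, β ≠ Finsupp.single (Sum.inr m) 1) →
      ∀ n' : Fin (d + 1) → ℕ, homog α β ≤ (pdeg n' : ℝ) → β (Sum.inr n') = 0) := by
  obtain ⟨hle, hiff⟩ := stmt5_aux d α hα β n hn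
  refine ⟨hle, hiff, ?_⟩
  intro hnp n' hge
  by_contra h
  have hn' : 1 ≤ β (Sum.inr n') := Nat.one_le_iff_ne_zero.2 h
  obtain ⟨hle', hiff'⟩ := stmt5_aux d α hα β n' hn'
  exact hnp n' (hiff'.1 (le_antisymm hle' hge))
end

section
/- Let ℓ > 0, p ∈ (1, ∞), a ∈ ℝ, and let g ∈ C¹((0, ℓ]). Then sup_{0 < r ≤ ℓ} | r^{-(a - 1/p)} g(r) |^p ≤ C ∫₀^ℓ ( |s^{-a} g(s)|^p + |s^{-a+1} g′(s)|^p ) ds, where C is a constant depending only on ℓ, a, and p (and the statement is interpreted as: if the right-hand side integral is finite, the left-hand side is bounded by C times it). -/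
/-!
Put `q = 1 - a p`, `w(s) = |s^{-a} g(s)|^p + |s^{1-a} g'(s)|^p` and `F(s) = s^q |g(s)|^p`.
Then the left-hand side is `F(r)`, and `F(s) = s |s^{-a} g(s)|^p ≤ s w(s)`. By the product and
chain rules and Young's inequality, `|F'| ≤ (|q| + p) w`. For `t ∈ [r/2, r]` the fundamental
theorem of calculus gives `F(r) ≤ F(t) + ∫_{r/2}^r |F'| ≤ r w(t) + ∫_{r/2}^r |F'|`, and averaging
over `t` yields `F(r) ≤ (|q| + p + 2) ∫₀^ℓ w`.
-/

open MeasureTheory Set intervalIntegral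

theorem le_add_intervalIntegral_abs_deriv {F : ℝ → ℝ} {b t r : ℝ} (hbt : b ≤ t) (htr : t ≤ r)
    (hF : ∀ s ∈ Icc b r, DifferentiableAt ℝ F s)
    (hF' : IntervalIntegrable (deriv F) volume b r) :
    F r ≤ F t + ∫ s in b..r, |deriv F s| := by
  have hbr : uIcc b r = Icc b r := uIcc_of_le (hbt.trans htr)
  have hsub : uIcc t r ⊆ uIcc b r := uIcc_subset_uIcc_right (hbr ▸ ⟨hbt, htr⟩)
  have htr' : IntervalIntegrable (deriv F) volume t r := hF'.mono_set hsub
  have hftc : ∫ s in t..r, deriv F s = F r - F t :=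
    integral_deriv_eq_sub (fun s hs => hF s (hbr ▸ hsub hs)) htr'
  calc F r = F t + ∫ s in t..r, deriv F s := by rw [hftc]; ring
    _ ≤ F t + ∫ s in t..r, |deriv F s| := by
      gcongr
      exact integral_mono_on htr htr' htr'.abs fun s _ => le_abs_self _
    _ ≤ F t + ∫ s in b..r, |deriv F s| := by
      gcongr
      exact integral_mono_interval hbt htr le_rfl (ae_of_all _ fun s => abs_nonneg _) hF'.abs

theorem le_mul_setIntegral_of_abs_deriv_le {F w : ℝ → ℝ} {ℓ K r : ℝ}
    (hF : ∀ s ∈ Ioc 0 ℓ, DifferentiableAt ℝ F s)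
    (hF' : ∀ s ∈ Ioc 0 ℓ, |deriv F s| ≤ K * w s)
    (hFw : ∀ s ∈ Ioc 0 ℓ, F s ≤ s * w s)
    (hw : IntegrableOn w (Ioc 0 ℓ)) (hw0 : ∀ s ∈ Ioc 0 ℓ, 0 ≤ w s) (hr : r ∈ Ioc 0 ℓ) :
    F r ≤ (K + 2) * ∫ s in Ioc 0 ℓ, w s := by
  obtain ⟨hr0, hrℓ⟩ := hr
  have hr2 : r / 2 ≤ r := by linarith
  have hsub : Icc (r / 2) r ⊆ Ioc 0 ℓ := fun s hs => ⟨by linarith [hs.1], hs.2.trans hrℓ⟩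
  have hint {f : ℝ → ℝ} (hf : IntegrableOn f (Ioc 0 ℓ)) : IntervalIntegrable f volume (r / 2) r :=
    (intervalIntegrable_iff_integrableOn_Ioc_of_le hr2).2
      (hf.mono_set (Ioc_subset_Icc_self.trans hsub))
  have hmono {f : ℝ → ℝ} (hf : IntegrableOn f (Ioc 0 ℓ)) (hf0 : ∀ s ∈ Ioc 0 ℓ, 0 ≤ f s) :
      ∫ s in r / 2..r, f s ≤ ∫ s in Ioc 0 ℓ, f s := by
    rw [integral_of_le hr2]
    exact setIntegral_mono_set hf ((ae_restrict_iff' measurableSet_Ioc).2 (ae_of_all _ hf0))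
      (Ioc_subset_Icc_self.trans hsub).eventuallyLE
  have hKw0 : ∀ s ∈ Ioc 0 ℓ, 0 ≤ K * w s := fun s hs => (abs_nonneg _).trans (hF' s hs)
  have hderiv : IntervalIntegrable (deriv F) volume (r / 2) r := by
    refine (hint (hw.const_mul K)).mono_fun' (measurable_deriv F).aestronglyMeasurable ?_
    refine (ae_restrict_iff' measurableSet_uIoc).2 (ae_of_all _ fun s hs => ?_)
    rw [uIoc_of_le hr2] at hs
    exact hF' s (hsub (Ioc_subset_Icc_self hs))
  set D := ∫ s in r / 2..r, |deriv F s|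
  have hD : D ≤ K * ∫ s in Ioc 0 ℓ, w s := by
    calc D ≤ ∫ s in r / 2..r, K * w s :=
          integral_mono_on hr2 hderiv.abs (hint (hw.const_mul K)) fun s hs => hF' s (hsub hs)
      _ ≤ ∫ s in Ioc 0 ℓ, K * w s := hmono (hw.const_mul K) hKw0
      _ = K * ∫ s in Ioc 0 ℓ, w s := MeasureTheory.integral_const_mul K _
  have hpoint : ∀ t ∈ Icc (r / 2) r, F r ≤ r * w t + D := fun t ht =>
    calc F r ≤ F t + D :=
          le_add_intervalIntegral_abs_deriv ht.1 ht.2 (fun s hs => hF s (hsub hs)) hderiv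
      _ ≤ t * w t + D := by gcongr; exact hFw t (hsub ht)
      _ ≤ r * w t + D := by gcongr; exacts [hw0 t (hsub ht), ht.2]
  have havg : r / 2 * F r ≤ r * (∫ s in Ioc 0 ℓ, w s) + r / 2 * D := by
    calc r / 2 * F r = ∫ _ in r / 2..r, F r := by
          rw [intervalIntegral.integral_const, smul_eq_mul]; ring
      _ ≤ ∫ t in r / 2..r, (r * w t + D) :=
          integral_mono_on hr2 intervalIntegrable_const
            ((hint hw).const_mul r |>.add intervalIntegrable_const) hpoint
      _ = r * (∫ t in r / 2..r, w t) + r / 2 * D := by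
          rw [integral_add ((hint hw).const_mul r) intervalIntegrable_const,
            intervalIntegral.integral_const_mul, intervalIntegral.integral_const, smul_eq_mul]
          ring
      _ ≤ r * (∫ s in Ioc 0 ℓ, w s) + r / 2 * D := by gcongr; exact hmono hw hw0
  nlinarith

theorem abs_rpow_mul_rpow {s : ℝ} (hs : 0 < s) (c x e : ℝ) :
    |s ^ c * x| ^ e = s ^ (c * e) * |x| ^ e := by
  rw [abs_mul, abs_of_pos (Real.rpow_pos_of_pos hs c),
    Real.mul_rpow (Real.rpow_nonneg hs.le c) (abs_nonneg x), ← Real.rpow_mul hs.le]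

theorem mul_rpow_sub_one_mul_le {p u v : ℝ} (hp : 1 < p) (hu : 0 ≤ u) (hv : 0 ≤ v) :
    p * (u ^ (p - 1) * v) ≤ (p - 1) * u ^ p + v ^ p := by
  have hp' := (Real.HolderConjugate.conjExponent hp).symm
  have h := Real.young_inequality_of_nonneg (Real.rpow_nonneg hu (p - 1)) hv hp'
  rw [← Real.rpow_mul hu, Real.conjExponent,
    mul_div_cancel₀ _ (sub_ne_zero.2 hp.ne')] at h
  have hp0 : 0 < p := by linarith
  calc p * (u ^ (p - 1) * v) ≤ p * (u ^ p / (p / (p - 1)) + v ^ p / p) := by gcongr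
    _ = (p - 1) * u ^ p + v ^ p := by field_simp

theorem abs_deriv_rpow_mul_abs_rpow_le {a p s x y : ℝ} (hp : 1 < p) (hs : 0 < s) :
    |(1 - a * p) * s ^ (1 - a * p - 1) * |x| ^ p
        + s ^ (1 - a * p) * (p * |x| ^ (p - 2) * x * y)|
      ≤ (|1 - a * p| + p) * (|s ^ (-a) * x| ^ p + |s ^ (-a + 1) * y| ^ p) := by
  have hv : |s ^ (-a + 1) * y| = s ^ (-a + 1) * |y| := by
    rw [abs_mul, abs_of_pos (Real.rpow_pos_of_pos hs _)]
  set u := |s ^ (-a) * x|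
  set v := |s ^ (-a + 1) * y|
  have hu : s ^ (1 - a * p - 1) * |x| ^ p = u ^ p := by
    rw [abs_rpow_mul_rpow hs]; ring_nf
  have huv : s ^ (1 - a * p) * (|x| ^ (p - 1) * |y|) = u ^ (p - 1) * v := by
    rw [abs_rpow_mul_rpow hs, hv]
    rw [show 1 - a * p = -a * (p - 1) + (-a + 1) by ring, Real.rpow_add hs]
    ring
  have hxx : |x| ^ (p - 2) * |x| = |x| ^ (p - 1) := by
    rw [← Real.rpow_add_one' (abs_nonneg x) (by linarith)]; ring_nf
  have hu0 : 0 ≤ u := abs_nonneg _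
  have hv0 : 0 ≤ v := abs_nonneg _
  calc _ ≤ |1 - a * p| * (s ^ (1 - a * p - 1) * |x| ^ p)
        + p * (s ^ (1 - a * p) * (|x| ^ (p - 1) * |y|)) := by
        refine (abs_add_le _ _).trans (le_of_eq ?_)
        rw [← hxx]
        simp only [abs_mul, abs_of_pos (Real.rpow_pos_of_pos hs _),
          abs_of_nonneg (Real.rpow_nonneg (abs_nonneg x) _), abs_of_pos (by linarith : 0 < p)]
        ring
    _ = |1 - a * p| * u ^ p + p * (u ^ (p - 1) * v) := by rw [hu, huv]
    _ ≤ |1 - a * p| * u ^ p + ((p - 1) * u ^ p + v ^ p) := by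
        gcongr; exact mul_rpow_sub_one_mul_le hp hu0 hv0
    _ ≤ (|1 - a * p| + p) * (u ^ p + v ^ p) := by
        nlinarith [abs_nonneg (1 - a * p), Real.rpow_nonneg hu0 p, Real.rpow_nonneg hv0 p]

theorem stmt7_general (ℓ a p : ℝ) (hp : 1 < p) :
    ∃ C : ℝ, 0 < C ∧
      ∀ g g' : ℝ → ℝ,
        (∀ s ∈ Set.Ioc (0 : ℝ) ℓ, HasDerivAt g (g' s) s) →
        IntegrableOn
          (fun s : ℝ => |s ^ (-a) * g s| ^ p + |s ^ (-a + 1) * g' s| ^ p)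
          (Set.Ioc (0 : ℝ) ℓ) →
        ∀ r ∈ Set.Ioc (0 : ℝ) ℓ,
          |r ^ (-(a - 1 / p)) * g r| ^ p ≤
            C * ∫ s in Set.Ioc (0 : ℝ) ℓ,
              (|s ^ (-a) * g s| ^ p + |s ^ (-a + 1) * g' s| ^ p) := by
  refine ⟨|1 - a * p| + p + 2, by positivity, fun g g' hg hint r hr => ?_⟩
  have hF : ∀ s ∈ Ioc 0 ℓ, HasDerivAt (fun s => s ^ (1 - a * p) * |g s| ^ p)
      ((1 - a * p) * s ^ (1 - a * p - 1) * |g s| ^ p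
        + s ^ (1 - a * p) * (p * |g s| ^ (p - 2) * g s * g' s)) s := fun s hs =>
    (Real.hasDerivAt_rpow_const (Or.inl hs.1.ne')).mul
      ((hasDerivAt_abs_rpow (g s) hp).comp s (hg s hs))
  have hLHS : |r ^ (-(a - 1 / p)) * g r| ^ p = r ^ (1 - a * p) * |g r| ^ p := by
    rw [abs_rpow_mul_rpow hr.1]
    congr 2
    field_simp
    ring
  rw [hLHS]
  refine le_mul_setIntegral_of_abs_deriv_le (F := fun s => s ^ (1 - a * p) * |g s| ^ p)
    (fun s hs => (hF s hs).differentiableAt)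
    (fun s hs => ?_) (fun s hs => ?_) hint (fun s _ => by positivity) hr
  · rw [(hF s hs).deriv]
    exact abs_deriv_rpow_mul_abs_rpow_le hp hs.1
  · have hs0 := hs.1
    calc s ^ (1 - a * p) * |g s| ^ p = s * |s ^ (-a) * g s| ^ p := by
          rw [abs_rpow_mul_rpow hs0, show 1 - a * p = 1 + -a * p by ring, Real.rpow_add hs0,
            Real.rpow_one, mul_assoc]
      _ ≤ s * (|s ^ (-a) * g s| ^ p + |s ^ (-a + 1) * g' s| ^ p) := by
          gcongr
          exact le_add_of_nonneg_right (by positivity)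

/-- Weighted one-dimensional Sobolev embedding on `(0, ℓ]`:
for `p ∈ (1,∞)`, `a ∈ ℝ` there is `C = C(ℓ, a, p)` such that for every `g ∈ C¹((0,ℓ])`
(with derivative `g'`) whose weighted norms are integrable,
`sup_{0 < r ≤ ℓ} |r^{-(a-1/p)} g(r)|^p ≤ C ∫₀^ℓ (|s^{-a} g(s)|^p + |s^{-a+1} g'(s)|^p) ds`. -/
theorem stmt7 (ℓ a p : ℝ) (hℓ : 0 < ℓ) (hp : 1 < p) :
    ∃ C : ℝ, 0 < C ∧
      ∀ g g' : ℝ → ℝ,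
        (∀ s ∈ Set.Ioc (0 : ℝ) ℓ, HasDerivAt g (g' s) s) →
        IntegrableOn
          (fun s : ℝ => |s ^ (-a) * g s| ^ p + |s ^ (-a + 1) * g' s| ^ p)
          (Set.Ioc (0 : ℝ) ℓ) →
        ∀ r ∈ Set.Ioc (0 : ℝ) ℓ,
          |r ^ (-(a - 1 / p)) * g r| ^ p ≤
            C * ∫ s in Set.Ioc (0 : ℝ) ℓ,
              (|s ^ (-a) * g s| ^ p + |s ^ (-a + 1) * g' s| ^ p) :=
  stmt7_general ℓ a p hp
end
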